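/- arXiv:2505.04425 — 3 statements merged into one kernel-verified Lean document; each statement's English description precedes it below -/
import Mathlib

section
/- Every fiber I_u = (π*)⁻¹(u), for u ∈ ℕ*, is a connected subset of M*. -/
open scoped unitInterval

noncomputable section

abbrev Mspace : Type := ℕ × I

def betaPi : StoneCech Mspace → Ultrafilter ℕ :=
  stoneCechExtend (continuous_of_discreteTopology.comp continuous_fst :
    Continuous fun p : Mspace => (pure p.1 : Ultrafilter ℕ))

def Mstar : Set (StoneCech Mspace) := (Set.range (stoneCechUnit : Mspace → StoneCech Mspace))ᶜ

def Nstar : Set (Ultrafilter ℕ) := (Set.range (pure : ℕ → Ultrafilter ℕ))ᶜ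

lemma betaPi_unit (m : Mspace) : betaPi (stoneCechUnit m) = pure m.1 :=
  congrFun (stoneCechExtend_extends _) m

lemma continuous_betaPi : Continuous betaPi := continuous_stoneCechExtend _

/-- Closure in `βM` of the "cylinder" `S × I`. -/
def Kcyl (S : Set ℕ) : Set (StoneCech Mspace) :=
  closure (stoneCechUnit '' (S ×ˢ (Set.univ : Set I)))

lemma mem_of_mem_Kcyl {S : Set ℕ} {p : StoneCech Mspace} (hp : p ∈ Kcyl S) :
    S ∈ betaPi p := by
  have h1 : betaPi p ∈ closure (betaPi '' (stoneCechUnit '' (S ×ˢ (Set.univ : Set I)))) :=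
    image_closure_subset_closure_image continuous_betaPi ⟨p, hp, rfl⟩
  have h2 : betaPi '' (stoneCechUnit '' (S ×ˢ (Set.univ : Set I))) ⊆
      {v : Ultrafilter ℕ | S ∈ v} := by
    rintro _ ⟨_, ⟨m, hm, rfl⟩, rfl⟩
    rw [betaPi_unit]
    exact hm.1
  exact closure_minimal h2 (ultrafilter_isClosed_basic S) h1

lemma cover_Kcyl (S : Set ℕ) (p : StoneCech Mspace) : p ∈ Kcyl S ∪ Kcyl Sᶜ := by
  have : Kcyl S ∪ Kcyl Sᶜ =
      closure (stoneCechUnit '' (S ×ˢ (Set.univ : Set I)) ∪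
        stoneCechUnit '' (Sᶜ ×ˢ (Set.univ : Set I))) := closure_union.symm
  rw [this, ← Set.image_union]
  have hU : S ×ˢ (Set.univ : Set I) ∪ Sᶜ ×ˢ (Set.univ : Set I) = Set.univ := by
    ext m
    simp [Set.mem_prod, em]
  rw [hU, Set.image_univ]
  exact denseRange_stoneCechUnit p

lemma fiber_eq (u : Ultrafilter ℕ) :
    betaPi ⁻¹' {u} = ⋂ S : {S : Set ℕ // S ∈ u}, Kcyl S.1 := by
  ext p
  simp only [Set.mem_preimage, Set.mem_singleton_iff, Set.mem_iInter]
  constructor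
  · rintro rfl ⟨S, hS⟩
    rcases cover_Kcyl S p with h | h
    · exact h
    · exact absurd hS ((Ultrafilter.compl_mem_iff_notMem).1 (mem_of_mem_Kcyl h))
  · intro h
    have hle : (betaPi p : Filter ℕ) ≤ u := by
      intro S hS
      exact mem_of_mem_Kcyl (h ⟨S, hS⟩)
    exact (Ultrafilter.coe_le_coe.1 hle)

lemma betaPi_surjective : Function.Surjective betaPi := by
  have hclosed : IsClosed (Set.range betaPi) := by
    have : IsCompact (Set.range betaPi) := by
      rw [← Set.image_univ]
      exact isCompact_univ.image continuous_betaPi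
    exact this.isClosed
  intro u
  have hsub : Set.range (pure : ℕ → Ultrafilter ℕ) ⊆ Set.range betaPi := by
    rintro _ ⟨n, rfl⟩
    exact ⟨stoneCechUnit (n, 0), betaPi_unit (n, 0)⟩
  have : (Set.univ : Set (Ultrafilter ℕ)) ⊆ Set.range betaPi := by
    rw [← denseRange_pure.closure_range]
    exact hclosed.closure_subset_iff.2 hsub
  exact this (Set.mem_univ u)

/-- the "line" over `n` -/
lemma line_preconnected (n : ℕ) :
    IsPreconnected (stoneCechUnit '' (({n} : Set ℕ) ×ˢ (Set.univ : Set I))) := by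
  have : stoneCechUnit '' (({n} : Set ℕ) ×ˢ (Set.univ : Set I)) =
      (fun x : I => stoneCechUnit (n, x)) '' Set.univ := by
    ext p
    constructor
    · rintro ⟨⟨m, x⟩, ⟨hm, -⟩, rfl⟩
      exact ⟨x, Set.mem_univ x, by simp_all⟩
    · rintro ⟨x, -, rfl⟩
      exact ⟨(n, x), ⟨rfl, Set.mem_univ _⟩, rfl⟩
  rw [this]
  exact isPreconnected_univ.image _
    (continuous_stoneCechUnit.comp (Continuous.prodMk_right n)).continuousOn

/-- Every fiber `I_u = (π*)⁻¹(u)`, for `u ∈ ℕ*`, is a connected subset of `M*`. -/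
theorem fiber_isConnected (u : Ultrafilter ℕ) (hu : u ∈ Nstar) :
    IsConnected {p | p ∈ Mstar ∧ betaPi p = u} := by
  have hset : {p | p ∈ Mstar ∧ betaPi p = u} = betaPi ⁻¹' {u} := by
    ext p
    simp only [Set.mem_setOf_eq, Set.mem_preimage, Set.mem_singleton_iff]
    refine ⟨fun h => h.2, fun h => ⟨?_, h⟩⟩
    intro hmem
    rcases hmem with ⟨m, rfl⟩
    exact hu ⟨m.1, (betaPi_unit m ▸ h).symm ▸ rfl⟩
  rw [hset]
  obtain ⟨p₀, hp₀⟩ := betaPi_surjective u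
  constructor
  · exact ⟨p₀, hp₀⟩
  · -- preconnected
    set F : Set (StoneCech Mspace) := betaPi ⁻¹' {u} with hF
    have hFclosed : IsClosed F :=
      (isClosed_singleton).preimage continuous_betaPi
    intro U V hUo hVo hcover hU hV
    by_contra hempty
    rw [Set.not_nonempty_iff_eq_empty] at hempty
    -- C, D closed disjoint
    have hCclosed : IsClosed (F ∩ U) := by
      have : F ∩ U = F \ V := by
        apply Set.eq_of_subset_of_subset
        · rintro x ⟨hx, hxU⟩
          refine ⟨hx, fun hxV => ?_⟩
          exact Set.eq_empty_iff_forall_notMem.1 hempty x ⟨hx, hxU, hxV⟩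
        · rintro x ⟨hx, hxV⟩
          rcases hcover hx with h | h
          · exact ⟨hx, h⟩
          · exact absurd h hxV
      rw [this]
      exact hFclosed.sdiff hVo
    have hDclosed : IsClosed (F ∩ V) := by
      have : F ∩ V = F \ U := by
        apply Set.eq_of_subset_of_subset
        · rintro x ⟨hx, hxV⟩
          refine ⟨hx, fun hxU => ?_⟩
          exact Set.eq_empty_iff_forall_notMem.1 hempty x ⟨hx, hxU, hxV⟩
        · rintro x ⟨hx, hxU⟩
          rcases hcover hx with h | h
          · exact absurd h hxU
          · exact ⟨hx, h⟩
      rw [this]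
      exact hFclosed.sdiff hUo
    have hdisj : Disjoint (F ∩ U) (F ∩ V) := by
      rw [Set.disjoint_iff_inter_eq_empty]
      rw [show F ∩ U ∩ (F ∩ V) = F ∩ (U ∩ V) by ext x; simp; tauto]
      exact hempty
    obtain ⟨U', V', hU'o, hV'o, hCU', hDV', hUV'⟩ :=
      normal_separation hCclosed hDclosed hdisj
    -- compactness: some Kcyl S ⊆ U' ∪ V'
    have hFsub : F ⊆ U' ∪ V' := by
      intro x hx
      rcases hcover hx with h | h
      · exact Or.inl (hCU' ⟨hx, h⟩)
      · exact Or.inr (hDV' ⟨hx, h⟩)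
    haveI : Nonempty {S : Set ℕ // S ∈ u} := ⟨⟨Set.univ, Filter.univ_mem⟩⟩
    obtain ⟨t, ht⟩ := isCompact_univ.elim_finite_subfamily_closed
      (fun S : {S : Set ℕ // S ∈ u} => Kcyl S.1 ∩ (U' ∪ V')ᶜ)
      (fun S => isClosed_closure.inter (hU'o.union hV'o).isClosed_compl)
      (by
        rw [Set.univ_inter, ← Set.iInter_inter, ← fiber_eq]
        exact Set.eq_empty_iff_forall_notMem.2 fun x ⟨hx, hx'⟩ => hx' (hFsub hx))
    set S₀ : Set ℕ := ⋂ i ∈ t, (i : {S : Set ℕ // S ∈ u}).1 with hS₀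
    have hS₀u : S₀ ∈ u := (Filter.biInter_finset_mem t).2 fun i _ => i.2
    have hKS₀ : Kcyl S₀ ⊆ U' ∪ V' := by
      intro x hx
      by_contra hx'
      have : x ∈ ⋂ i ∈ t, (Kcyl (i : {S : Set ℕ // S ∈ u}).1 ∩ (U' ∪ V')ᶜ) := by
        refine Set.mem_iInter₂.2 fun i hi => ⟨?_, hx'⟩
        exact closure_mono (Set.image_mono (Set.prod_mono
          (Set.biInter_subset_of_mem hi) le_rfl)) hx
      exact Set.eq_empty_iff_forall_notMem.1 ht x ⟨Set.mem_univ x, this⟩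
    -- each line lies in U' or V'
    have hline : ∀ n ∈ S₀,
        stoneCechUnit '' (({n} : Set ℕ) ×ˢ (Set.univ : Set I)) ⊆ U' ∨
        stoneCechUnit '' (({n} : Set ℕ) ×ˢ (Set.univ : Set I)) ⊆ V' := by
      intro n hn
      apply (line_preconnected n).subset_or_subset hU'o hV'o hUV'
      refine Set.Subset.trans ?_ hKS₀
      refine Set.Subset.trans ?_ subset_closure
      exact Set.image_mono (Set.prod_mono (by simpa using hn) le_rfl)
    set A : Set ℕ := {n | n ∈ S₀ ∧
      stoneCechUnit '' (({n} : Set ℕ) ×ˢ (Set.univ : Set I)) ⊆ U'} with hA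
    have hsplit : A ∈ u ∨ S₀ \ A ∈ u := by
      rcases (Ultrafilter.union_mem_iff).1
        (Filter.mem_of_superset hS₀u (by
          intro n hn
          by_cases h : n ∈ A
          · exact Or.inl h
          · exact Or.inr ⟨hn, h⟩) : A ∪ (S₀ \ A) ∈ u) with h | h
      · exact Or.inl h
      · exact Or.inr h
    -- general contradiction helper
    have key : ∀ (B : Set ℕ) (W W' : Set (StoneCech Mspace)), B ∈ u → IsOpen W' →
        Disjoint W W' →
        (∀ n ∈ B, stoneCechUnit '' (({n} : Set ℕ) ×ˢ (Set.univ : Set I)) ⊆ W) →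
        (F ∩ W').Nonempty → False := by
      intro B W W' hBu hW'o hdisjWW' hlines ⟨x, hxF, hxW'⟩
      have hBsub : stoneCechUnit '' (B ×ˢ (Set.univ : Set I)) ⊆ W := by
        rintro _ ⟨⟨n, y⟩, ⟨hn, -⟩, rfl⟩
        exact hlines n hn ⟨(n, y), ⟨rfl, Set.mem_univ _⟩, rfl⟩
      have hFW : F ⊆ closure W := by
        rw [hF, fiber_eq]
        intro z hz
        have := Set.mem_iInter.1 hz ⟨B, hBu⟩
        exact closure_mono hBsub this
      have : x ∈ closure W := hFW hxF
      rcases mem_closure_iff.1 this W' hW'o hxW' with ⟨y, hyW', hyW⟩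
      exact hdisjWW'.ne_of_mem hyW hyW' rfl
    rcases hsplit with hAu | hBu
    · -- F ⊆ closure U', but F ∩ V ⊆ V' nonempty
      obtain ⟨x, hx⟩ := hV
      exact key A U' V' hAu hV'o hUV' (fun n hn => hn.2) ⟨x, hx.1, hDV' hx⟩
    · obtain ⟨x, hx⟩ := hU
      refine key (S₀ \ A) V' U' hBu hU'o hUV'.symm ?_ ⟨x, hx.1, hCU' hx⟩
      intro n hn
      rcases hline n hn.1 with h | h
      · exact absurd ⟨hn.1, h⟩ hn.2
      · exact h
end
end

section
/- Let F and G be disjoint closed subsets of M = ℕ × [0,1], and let ℬ be the lattice of closed subsets of [0,1] generated by closed intervals with rational endpoints. Then there exist B, C ∈ ℬ^ℕ such that F ⊆ F_B, G ⊆ F_C, and F_B ∩ F_C = ∅, where F_B = ⋃_{k∈ℕ} {k} × B(k). -/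
open scoped unitInterval

/-- The lattice `ℬ` of closed subsets of `[0,1]` generated under finite unions and
intersections by the closed intervals with rational endpoints (together with `∅` and
`[0,1]`). -/
inductive GenLat : Set I → Prop
  | empty : GenLat ∅
  | univ : GenLat Set.univ
  | icc (a b : I) (ha : ∃ q : ℚ, (a : ℝ) = q) (hb : ∃ q : ℚ, (b : ℝ) = q) :
      GenLat (Set.Icc a b)
  | union {s t : Set I} : GenLat s → GenLat t → GenLat (s ∪ t)
  | inter {s t : Set I} : GenLat s → GenLat t → GenLat (s ∩ t)

/-!
Every set in `ℬ` is closed, and every point of `[0,1]` has arbitrarily small neighbourhoods in `ℬ`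
(intervals with rational endpoints, clamped to `[0,1]`). By compactness, a compact `K` disjoint
from a closed `S` is therefore covered by some `B ∈ ℬ` disjoint from `S`. Doing this first for the
slice `F(k)` against `G(k)`, and then for `G(k)` against the closed set `B(k)`, separates the two
slices at each level `k` independently.
-/

open Set Topology

namespace GenLat

theorem isClosed {s : Set I} (h : GenLat s) : IsClosed s := by
  induction h with
  | empty => exact isClosed_empty
  | univ => exact isClosed_univ
  | icc a b => exact isClosed_Icc
  | union _ _ hs ht => exact hs.union ht
  | inter _ _ hs ht => exact hs.inter ht

theorem biUnion {ι : Type*} (t : Finset ι) {f : ι → Set I} (hf : ∀ i ∈ t, GenLat (f i)) :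
    GenLat (⋃ i ∈ t, f i) := by
  classical
  induction t using Finset.induction with
  | empty => simpa using GenLat.empty
  | insert i t _ ih =>
    rw [Finset.set_biUnion_insert]
    exact (hf i (Finset.mem_insert_self i t)).union
      (ih fun j hj => hf j (Finset.mem_insert_of_mem hj))

theorem Icc_projIcc (p q : ℚ) :
    GenLat (Icc (projIcc 0 1 zero_le_one (p : ℝ)) (projIcc 0 1 zero_le_one (q : ℝ))) :=
  icc _ _ ⟨max 0 (min 1 p), by simp [projIcc]⟩ ⟨max 0 (min 1 q), by simp [projIcc]⟩

end GenLat

theorem exists_genLat_mem_nhds_subset {x : I} {V : Set I} (hV : V ∈ 𝓝 x) :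
    ∃ s, GenLat s ∧ s ∈ 𝓝 x ∧ s ⊆ V := by
  obtain ⟨ε, hε, hball⟩ := Metric.mem_nhds_iff.1 hV
  obtain ⟨p, hpx, hxp⟩ := exists_rat_btwn (sub_lt_self (x : ℝ) hε)
  obtain ⟨q, hxq, hqx⟩ := exists_rat_btwn (lt_add_of_pos_right (x : ℝ) hε)
  have hx0 := unitInterval.nonneg x
  have hx1 := unitInterval.le_one x
  refine ⟨_, GenLat.Icc_projIcc p q, ?_, fun y hy => hball ?_⟩
  · refine Filter.mem_of_superset ((isOpen_Ioo.preimage continuous_subtype_val).mem_nhds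
      ⟨hxp, hxq⟩) fun y ⟨hpy, hyq⟩ => ?_
    have hy0 := unitInterval.nonneg y
    have hy1 := unitInterval.le_one y
    simp only [mem_Icc, ← Subtype.coe_le_coe, coe_projIcc]
    grind
  · have hy0 := unitInterval.nonneg y
    have hy1 := unitInterval.le_one y
    simp only [mem_Icc, ← Subtype.coe_le_coe, coe_projIcc] at hy
    rw [Metric.mem_ball, Subtype.dist_eq, Real.dist_eq, abs_sub_lt_iff]
    grind

theorem exists_genLat_superset_disjoint {K S : Set I} (hK : IsCompact K) (hS : IsClosed S)
    (hKS : Disjoint K S) : ∃ B, GenLat B ∧ K ⊆ B ∧ Disjoint B S := by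
  choose U hU hUx hUS using fun x (hx : x ∈ K) =>
    exists_genLat_mem_nhds_subset (hS.isOpen_compl.mem_nhds (hKS.notMem_of_mem_left hx))
  obtain ⟨t, hKt⟩ := hK.elim_nhds_subcover' U hUx
  refine ⟨_, GenLat.biUnion t fun x _ => hU x x.2, hKt, ?_⟩
  refine disjoint_iUnion₂_left.2 fun x _ => subset_compl_iff_disjoint_right.1 (hUS x x.2)

theorem exists_genLat_separating {A A' : Set I} (hA : IsClosed A) (hA' : IsClosed A')
    (hAA' : Disjoint A A') :
    ∃ B C, GenLat B ∧ GenLat C ∧ A ⊆ B ∧ A' ⊆ C ∧ Disjoint B C := by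
  obtain ⟨B, hB, hAB, hBA'⟩ := exists_genLat_superset_disjoint hA.isCompact hA' hAA'
  obtain ⟨C, hC, hA'C, hCB⟩ :=
    exists_genLat_superset_disjoint hA'.isCompact hB.isClosed hBA'.symm
  exact ⟨B, C, hB, hC, hAB, hA'C, hCB.symm⟩

/-- For disjoint closed `F, G ⊆ M = ℕ × [0,1]` there are `B, C ∈ ℬ^ℕ` with
`F ⊆ F_B`, `G ⊆ F_C` and `F_B ∩ F_C = ∅`, where `F_B = ⋃_k {k} × B(k)`. -/
theorem separate_closed_sets (F G : Set (ℕ × I)) (hF : IsClosed F) (hG : IsClosed G)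
    (hFG : Disjoint F G) :
    ∃ B C : ℕ → Set I, (∀ k, GenLat (B k)) ∧ (∀ k, GenLat (C k)) ∧
      F ⊆ {p : ℕ × I | p.2 ∈ B p.1} ∧ G ⊆ {p : ℕ × I | p.2 ∈ C p.1} ∧
      {p : ℕ × I | p.2 ∈ B p.1} ∩ {p : ℕ × I | p.2 ∈ C p.1} = ∅ := by
  have hslice (k : ℕ) : Continuous fun x : I => (k, x) := by fun_prop
  choose B C hB hC hFB hGC hBC using fun k =>
    exists_genLat_separating (hF.preimage (hslice k)) (hG.preimage (hslice k))
      (hFG.preimage _)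
  refine ⟨B, C, hB, hC, fun p hp => hFB p.1 hp, fun p hp => hGC p.1 hp, ?_⟩
  exact eq_empty_iff_forall_notMem.2 fun p ⟨hpB, hpC⟩ => (hBC p.1).notMem_of_mem_left hpB hpC
end

section
/- Let f : C → D be a homeomorphism between cocompact subsets of ℍ = [0,∞) (i.e., ℍ \ C and ℍ \ D are bounded). Then f is eventually monotone: there exists T ≥ 0 such that f is either strictly increasing on C ∩ [T,∞) or strictly decreasing on C ∩ [T,∞); and if lim_{x→∞, x∈C} f(x) = ∞ then f is strictly increasing on some tail of C. -/
/-!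
Since `ℍ \ C` is bounded, `C` contains a whole ray `[T, ∞)`. On that ray `f` is a continuous
injective real function, so it is strictly monotone or strictly antitone by the intermediate value
theorem. If moreover `f(x) → ∞`, it cannot be antitone on a ray, as it would stay below `f(T)`.
-/

open Set Filter

lemma Bornology.IsBounded.exists_Ici_subset_of_Ici_diff {C : Set ℝ} {a : ℝ}
    (hC : Bornology.IsBounded (Ici a \ C)) : ∃ T, a ≤ T ∧ Ici T ⊆ C := by
  obtain ⟨M, hM⟩ := hC.bddAbove
  refine ⟨max a (M + 1), le_max_left _ _, fun t ht => by_contra fun htC => ?_⟩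
  have htM : t ≤ M := hM ⟨mem_Ici.mpr ((le_max_left _ _).trans ht), htC⟩
  linarith [(le_max_right a (M + 1)).trans (mem_Ici.mp ht)]

lemma Continuous.strictMonoOn_or_strictAntiOn_of_Ici_subset {α δ : Type*}
    [ConditionallyCompleteLinearOrder α] [TopologicalSpace α] [OrderTopology α]
    [DenselyOrdered α]
    [LinearOrder δ] [TopologicalSpace δ] [OrderClosedTopology δ] {C : Set α} {T : α}
    (hTC : Ici T ⊆ C) {F : C → δ} (hF : Continuous F) (hinj : Function.Injective F) :
    StrictMonoOn F {x | T ≤ (x : α)} ∨ StrictAntiOn F {x | T ≤ (x : α)} := by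
  have : Inhabited (Ici T) := ⟨⟨T, self_mem_Ici⟩⟩
  have hray := (hF.comp (continuous_inclusion hTC)).strictMono_of_inj
    (hinj.comp (inclusion_injective hTC))
  exact hray.imp (fun h x hx y hy hxy => h (a := ⟨x, hx⟩) (b := ⟨y, hy⟩) hxy)
    (fun h x hx y hy hxy => h (a := ⟨x, hx⟩) (b := ⟨y, hy⟩) hxy)

lemma AntitoneOn.not_tendsto_atTop_atTop {α β : Type*} [Preorder α] [IsDirected α (· ≤ ·)]
    [Preorder β] [NoMaxOrder β] {F : α → β} {a : α} (hF : AntitoneOn F (Ici a)) :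
    ¬ Tendsto F atTop atTop := by
  have : Nonempty α := ⟨a⟩
  intro htop
  obtain ⟨x, hFx, hax⟩ :=
    ((htop.eventually (eventually_gt_atTop (F a))).and (eventually_ge_atTop a)).exists
  exact (hF self_mem_Ici hax hax).not_gt hFx

theorem homeo_cocompact_eventually_monotone_general
    (C D : Set ℝ)
    (hC : Bornology.IsBounded (Set.Ici 0 \ C))
    (f : ↥C ≃ₜ ↥D) :
    (∃ T : ℝ, 0 ≤ T ∧
      (StrictMonoOn (fun x : ↥C => (f x : ℝ)) {x : ↥C | T ≤ (x : ℝ)} ∨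
       StrictAntiOn (fun x : ↥C => (f x : ℝ)) {x : ↥C | T ≤ (x : ℝ)})) ∧
    (Filter.Tendsto (fun x : ↥C => (f x : ℝ)) Filter.atTop Filter.atTop →
      ∃ T : ℝ, 0 ≤ T ∧
        StrictMonoOn (fun x : ↥C => (f x : ℝ)) {x : ↥C | T ≤ (x : ℝ)}) := by
  obtain ⟨T, hT0, hTC⟩ := hC.exists_Ici_subset_of_Ici_diff
  have hF : Continuous (fun x : C => (f x : ℝ)) := continuous_subtype_val.comp f.continuous
  have hmono := hF.strictMonoOn_or_strictAntiOn_of_Ici_subset hTC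
    (Subtype.val_injective.comp f.injective)
  refine ⟨⟨T, hT0, hmono⟩, fun htop => ⟨T, hT0, hmono.resolve_right fun hanti => ?_⟩⟩
  exact AntitoneOn.not_tendsto_atTop_atTop (a := (⟨T, hTC self_mem_Ici⟩ : C))
    hanti.antitoneOn htop

/-- Let `f : C → D` be a homeomorphism between cocompact subsets of `ℍ = [0,∞)`
(complements bounded in `ℍ`).  Then `f` is eventually strictly monotone: on some tail
`C ∩ [T,∞)` it is either strictly increasing or strictly decreasing; and if
`f(x) → ∞` as `x → ∞` in `C`, then `f` is strictly increasing on some tail. -/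
theorem homeo_cocompact_eventually_monotone
    (C D : Set ℝ) (hC0 : C ⊆ Set.Ici 0) (hD0 : D ⊆ Set.Ici 0)
    (hC : Bornology.IsBounded (Set.Ici 0 \ C)) (hD : Bornology.IsBounded (Set.Ici 0 \ D))
    (f : ↥C ≃ₜ ↥D) :
    (∃ T : ℝ, 0 ≤ T ∧
      (StrictMonoOn (fun x : ↥C => (f x : ℝ)) {x : ↥C | T ≤ (x : ℝ)} ∨
       StrictAntiOn (fun x : ↥C => (f x : ℝ)) {x : ↥C | T ≤ (x : ℝ)})) ∧
    (Filter.Tendsto (fun x : ↥C => (f x : ℝ)) Filter.atTop Filter.atTop →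
      ∃ T : ℝ, 0 ≤ T ∧
        StrictMonoOn (fun x : ↥C => (f x : ℝ)) {x : ↥C | T ≤ (x : ℝ)}) :=
  homeo_cocompact_eventually_monotone_general C D hC f
end
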